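/- arXiv:2601.20217 — 2 statements merged into one kernel-verified Lean document; each statement's English description precedes it below -/
import Mathlib

section
/- Let Z be a random variable taking values in a finite set T with P(Z = z) > 0 and P(Z = z, G = 1) > 0 and P(Z = z, G = 0) > 0 for every z ∈ T. Then the weighted sum of miscalibration, δ_C := Σ_{z∈T} (E[Y | Z = z, G = 1] − E[Y | Z = z, G = 0]) · Var(G | Z = z) · P(Z = z), equals the expected conditional covariance E[Cov(Y, G | Z)] = E[Y·G] − E[ E[Y | σ(Z)] · E[G | σ(Z)] ]. -/
open MeasureTheory ProbabilityTheory

/-- Conditional expectation of `X` given an event `A`: `E[X | A] = E[X·1_A] / P(A)`. -/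
noncomputable def condExpEvent {Ω : Type*} [MeasurableSpace Ω] (P : Measure Ω)
    (X : Ω → ℝ) (A : Set Ω) : ℝ :=
  (∫ ω in A, X ω ∂P) / (P A).toReal

/-- Conditional variance of a {0,1}-valued `G` given an event `A`:
`Var(G | A) = E[G | A]·(1 − E[G | A])`. -/
noncomputable def condVarEvent {Ω : Type*} [MeasurableSpace Ω] (P : Measure Ω)
    (G : Ω → ℝ) (A : Set Ω) : ℝ :=
  condExpEvent P G A * (1 - condExpEvent P G A)

/-! On each atom `{Z = z}` the conditional expectation given `σ(Z)` is the elementary one, so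
both sides split into sums over `z ∈ T`. On a single atom write `p₁, p₀` for the masses of
`{G = 1}` and `{G = 0}` and `a, b` for the integrals of `Y` over them; the summands then agree
because `a - (a + b) p₁ / (p₁ + p₀) = (a / p₁ - b / p₀) p₁ p₀ / (p₁ + p₀)`. -/

theorem mul_eq_indicator_of_forall_eq_zero_or_eq_one {Ω : Type*} {G : Ω → ℝ}
    (hG01 : ∀ ω, G ω = 0 ∨ G ω = 1) (X : Ω → ℝ) :
    (fun ω => X ω * G ω) = {ω | G ω = 1}.indicator X := by
  funext ω
  rcases hG01 ω with h | h <;> simp [h]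

theorem eq_indicator_of_forall_eq_zero_or_eq_one {Ω : Type*} {G : Ω → ℝ}
    (hG01 : ∀ ω, G ω = 0 ∨ G ω = 1) : G = {ω | G ω = 1}.indicator 1 := by
  simpa using mul_eq_indicator_of_forall_eq_zero_or_eq_one hG01 1

section Fibers

variable {Ω β : Type*} [MeasurableSpace Ω] [MeasurableSpace β] [MeasurableSingletonClass β]
  {P : Measure Ω} {Z : Ω → β}

theorem integral_eq_sum_setIntegral_fiber {T : Finset β} (hZ : Measurable Z)
    (hZT : ∀ ω, Z ω ∈ T) {f : Ω → ℝ} (hf : ∀ z ∈ T, IntegrableOn f {ω | Z ω = z} P) :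
    ∫ ω, f ω ∂P = ∑ z ∈ T, ∫ ω in {ω | Z ω = z}, f ω ∂P := by
  have hcover : (⋃ z ∈ T, {ω | Z ω = z}) = Set.univ :=
    Set.eq_univ_of_forall fun ω => Set.mem_biUnion (hZT ω) rfl
  rw [← setIntegral_univ, ← hcover, integral_biUnion_finset (s := fun z => {ω | Z ω = z}) T
    (fun z _ => hZ (measurableSet_singleton z))
    ((Set.pairwiseDisjoint_fiber Z (T : Set β)).subset le_rfl) hf]

theorem integral_comp_eq_sum_mul_measureReal [IsFiniteMeasure P] {T : Finset β}
    (hZ : Measurable Z) (hZT : ∀ ω, Z ω ∈ T) (g : β → ℝ) :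
    ∫ ω, g (Z ω) ∂P = ∑ z ∈ T, g z * P.real {ω | Z ω = z} := by
  have hfiber (z : β) : Set.EqOn (fun ω => g (Z ω)) (fun _ => g z) {ω | Z ω = z} :=
    fun ω hω => congrArg g hω
  have hmeas (z : β) : MeasurableSet {ω | Z ω = z} := hZ (measurableSet_singleton z)
  rw [integral_eq_sum_setIntegral_fiber hZ hZT
    fun z _ => (integrableOn_const).congr_fun (hfiber z).symm (hmeas z)]
  refine Finset.sum_congr rfl fun z _ => ?_
  rw [setIntegral_congr_fun (hmeas z) (hfiber z), setIntegral_const, smul_eq_mul, mul_comm]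

theorem condExp_comap_apply [IsFiniteMeasure P] (hZ : Measurable Z) {X : Ω → ℝ}
    (hX : Integrable X P) (ω : Ω) (hω : P {ω' | Z ω' = Z ω} ≠ 0) :
    P[X | MeasurableSpace.comap Z inferInstance] ω =
      condExpEvent P X {ω' | Z ω' = Z ω} := by
  obtain ⟨h, -, hh⟩ := (stronglyMeasurable_condExp (m := MeasurableSpace.comap Z inferInstance)
    (μ := P) (f := X)).exists_eq_measurable_comp
  set A := {ω' | Z ω' = Z ω}
  have hA : MeasurableSet[MeasurableSpace.comap Z inferInstance] A :=
    ⟨{Z ω}, measurableSet_singleton _, rfl⟩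
  have hint := setIntegral_condExp hZ.comap_le hX hA
  rw [hh, setIntegral_congr_fun (f := h ∘ Z) (g := fun _ => h (Z ω)) (hZ.comap_le A hA)
    (fun ω' (hω' : Z ω' = Z ω) => congrArg h hω'), setIntegral_const, smul_eq_mul] at hint
  rw [hh, condExpEvent, ← hint, ← measureReal_def,
    mul_div_cancel_left₀ _ ((measureReal_ne_zero_iff).mpr hω)]
  rfl

end Fibers

section Events

variable {Ω : Type*} [MeasurableSpace Ω] {P : Measure Ω}

theorem condExpEvent_sub_mul_condVarEvent_mul_measureReal [IsFiniteMeasure P] {A : Set Ω}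
    {G X : Ω → ℝ} (hG : Measurable G) (hG01 : ∀ ω, G ω = 0 ∨ G ω = 1)
    (hX : IntegrableOn X A P) (h1 : P (A ∩ {ω | G ω = 1}) ≠ 0)
    (h0 : P (A ∩ {ω | G ω = 0}) ≠ 0) :
    (condExpEvent P X (A ∩ {ω | G ω = 1}) - condExpEvent P X (A ∩ {ω | G ω = 0})) *
        condVarEvent P G A * P.real A =
      ∫ ω in A ∩ {ω | G ω = 1}, X ω ∂P - condExpEvent P X A * condExpEvent P G A * P.real A := by
  have hG1 : MeasurableSet {ω | G ω = 1} := hG (measurableSet_singleton 1)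
  have hA0 : A ∩ {ω | G ω = 0} = A \ {ω | G ω = 1} := by
    ext ω
    rcases hG01 ω with h | h <;> simp [h]
  rw [hA0] at h0 ⊢
  have hPA : P.real A = P.real (A ∩ {ω | G ω = 1}) + P.real (A \ {ω | G ω = 1}) :=
    (measureReal_inter_add_sdiff hG1).symm
  have hXA : ∫ ω in A, X ω ∂P =
      ∫ ω in A ∩ {ω | G ω = 1}, X ω ∂P + ∫ ω in A \ {ω | G ω = 1}, X ω ∂P :=
    (integral_inter_add_sdiff hG1 hX).symm
  have hGA : ∫ ω in A, G ω ∂P = P.real (A ∩ {ω | G ω = 1}) := by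
    conv_lhs => rw [eq_indicator_of_forall_eq_zero_or_eq_one hG01]
    simp [setIntegral_indicator hG1]
  have hp1 : P.real (A ∩ {ω | G ω = 1}) ≠ 0 := (measureReal_ne_zero_iff).mpr h1
  have hp0 : P.real (A \ {ω | G ω = 1}) ≠ 0 := (measureReal_ne_zero_iff).mpr h0
  simp only [condVarEvent, condExpEvent, ← measureReal_def, hPA, hXA, hGA]
  field_simp
  ring

end Events

theorem stmt1_general {Ω : Type*} [MeasurableSpace Ω] (P : Measure Ω) [IsProbabilityMeasure P]
    (Y Z G : Ω → ℝ) (hZm : Measurable Z) (hGm : Measurable G)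
    (hY2 : MemLp Y 2 P) (hG01 : ∀ ω, G ω = 0 ∨ G ω = 1)
    (T : Finset ℝ) (hZT : ∀ ω, Z ω ∈ T)
    (hpos : ∀ z ∈ T, 0 < P {ω | Z ω = z})
    (hpos1 : ∀ z ∈ T, 0 < P ({ω | Z ω = z} ∩ {ω | G ω = 1}))
    (hpos0 : ∀ z ∈ T, 0 < P ({ω | Z ω = z} ∩ {ω | G ω = 0})) :
    ∑ z ∈ T,
        (condExpEvent P Y ({ω | Z ω = z} ∩ {ω | G ω = 1}) -
          condExpEvent P Y ({ω | Z ω = z} ∩ {ω | G ω = 0})) *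
        condVarEvent P G {ω | Z ω = z} * (P {ω | Z ω = z}).toReal
      = ∫ ω, Y ω * G ω ∂P -
        ∫ ω, (P[Y | MeasurableSpace.comap Z inferInstance]) ω *
          (P[G | MeasurableSpace.comap Z inferInstance]) ω ∂P := by
  have hY : Integrable Y P := hY2.integrable one_le_two
  have hG1 : MeasurableSet {ω | G ω = 1} := hGm (measurableSet_singleton 1)
  have hG : Integrable G P := by
    rw [eq_indicator_of_forall_eq_zero_or_eq_one hG01]
    exact (integrable_const 1).indicator hG1
  have hcondExp {X : Ω → ℝ} (hX : Integrable X P) (ω : Ω) :=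
    condExp_comap_apply hZm hX ω (hpos _ (hZT ω)).ne'
  have hYG_sum : ∫ ω, Y ω * G ω ∂P = ∑ z ∈ T, ∫ ω in {ω | Z ω = z} ∩ {ω | G ω = 1}, Y ω ∂P := by
    rw [mul_eq_indicator_of_forall_eq_zero_or_eq_one hG01 Y,
      integral_eq_sum_setIntegral_fiber hZm hZT fun z _ => (hY.indicator hG1).integrableOn]
    simp only [setIntegral_indicator hG1]
  have hprod_sum : ∫ ω, (P[Y | MeasurableSpace.comap Z inferInstance]) ω *
      (P[G | MeasurableSpace.comap Z inferInstance]) ω ∂P = ∑ z ∈ T,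
        condExpEvent P Y {ω | Z ω = z} * condExpEvent P G {ω | Z ω = z} *
          P.real {ω | Z ω = z} := by
    simp only [hcondExp hY, hcondExp hG]
    exact integral_comp_eq_sum_mul_measureReal hZm hZT
      fun z => condExpEvent P Y {ω | Z ω = z} * condExpEvent P G {ω | Z ω = z}
  rw [hYG_sum, hprod_sum, ← Finset.sum_sub_distrib]
  refine Finset.sum_congr rfl fun z hz => ?_
  exact condExpEvent_sub_mul_condVarEvent_mul_measureReal hGm
    hG01 hY.integrableOn (hpos1 z hz).ne' (hpos0 z hz).ne'

/-- For `Z` taking values in a finite set `T` with all the relevant events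
having positive probability, the weighted sum of miscalibration
`δ_C = Σ_{z∈T} (E[Y|Z=z,G=1] − E[Y|Z=z,G=0])·Var(G|Z=z)·P(Z=z)` equals
`E[Cov(Y,G|Z)] = E[Y·G] − E[E[Y|σ(Z)]·E[G|σ(Z)]]`. -/
theorem stmt1 {Ω : Type*} [MeasurableSpace Ω] (P : Measure Ω) [IsProbabilityMeasure P]
    (Y Z G : Ω → ℝ) (hYm : Measurable Y) (hZm : Measurable Z) (hGm : Measurable G)
    (hY2 : MemLp Y 2 P) (hG01 : ∀ ω, G ω = 0 ∨ G ω = 1)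
    (T : Finset ℝ) (hZT : ∀ ω, Z ω ∈ T)
    (hpos : ∀ z ∈ T, 0 < P {ω | Z ω = z})
    (hpos1 : ∀ z ∈ T, 0 < P ({ω | Z ω = z} ∩ {ω | G ω = 1}))
    (hpos0 : ∀ z ∈ T, 0 < P ({ω | Z ω = z} ∩ {ω | G ω = 0})) :
    ∑ z ∈ T,
        (condExpEvent P Y ({ω | Z ω = z} ∩ {ω | G ω = 1}) -
          condExpEvent P Y ({ω | Z ω = z} ∩ {ω | G ω = 0})) *
        condVarEvent P G {ω | Z ω = z} * (P {ω | Z ω = z}).toReal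
      = ∫ ω, Y ω * G ω ∂P -
        ∫ ω, (P[Y | MeasurableSpace.comap Z inferInstance]) ω *
          (P[G | MeasurableSpace.comap Z inferInstance]) ω ∂P :=
  stmt1_general P Y Z G hZm hGm hY2 hG01 T hZT hpos hpos1 hpos0
end

section
/- Suppose Y is {0,1}-valued, Z is globally calibrated (E[Y | σ(Z)] = Z almost surely), and P(Y = y, G = g) > 0 for all y, g ∈ {0,1}. If the model is perfectly fair in the sense that E[Y·G] − E[ E[Y | σ(Z)] · E[G | σ(Z)] ] = 0 and E[Z | Y = y, G = 1] = E[Z | Y = y, G = 0] for y ∈ {0,1}, then either E[(Y − Z)²] = 0 (Z is an oracle) or P(G = 1 | Y = 1) = P(G = 1 | Y = 0) (equal base rates across groups). -/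
open MeasureTheory ProbabilityTheory

/-- Conditional probability of `B` given `A`: `P(B | A) = P(B ∩ A)/P(A)`. -/
noncomputable def condProbEvent {Ω : Type*} [MeasurableSpace Ω] (P : Measure Ω)
    (B A : Set Ω) : ℝ :=
  (P (B ∩ A)).toReal / (P A).toReal

/-! Calibration makes `Z` the orthogonal projection of `Y` onto `σ(Z)`, so `E[YZ] = E[Z²]` and,
as `Y² = Y`, the mean squared error is `E[Y] - E[YZ]`; it also turns the fairness condition
`δ_C = 0` into `E[YG] = E[ZG]`. Balance says that `E[Z | Y = y, G = g] = a_y` does not depend on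
`g`. With `q_y = P(Y = y)` and `p_y = P(G = 1, Y = y)` this gives
`MSE = q₁ (1 - a₁) = a₀ q₀` (using `E[Z] = E[Y] = q₁`) and `p₁ = E[YG] = E[ZG] = a₁ p₁ + a₀ p₀`,
hence `MSE · (p₀ / q₀ - p₁ / q₁) = a₀ p₀ - (1 - a₁) p₁ = 0`. -/

section ConditionalExpectation

variable {Ω : Type*} {m m₀ : MeasurableSpace Ω} {μ : Measure Ω} [IsFiniteMeasure μ]

theorem integral_mul_condExp_of_stronglyMeasurable (hm : m ≤ m₀) {f g : Ω → ℝ}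
    (hf : StronglyMeasurable[m] f) (hfg : Integrable (f * g) μ) (hg : Integrable g μ) :
    ∫ ω, f ω * μ[g | m] ω ∂μ = ∫ ω, f ω * g ω ∂μ :=
  calc ∫ ω, f ω * μ[g | m] ω ∂μ = ∫ ω, μ[f * g | m] ω ∂μ :=
        integral_congr_ae (condExp_mul_of_stronglyMeasurable_left hf hfg hg).symm
    _ = ∫ ω, f ω * g ω ∂μ := integral_condExp hm

theorem integral_condExp_mul_condExp (hm : m ≤ m₀) {f g : Ω → ℝ}
    (hf : MemLp f 2 μ) (hg : MemLp g 2 μ) :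
    ∫ ω, μ[f | m] ω * μ[g | m] ω ∂μ = ∫ ω, μ[f | m] ω * g ω ∂μ :=
  integral_mul_condExp_of_stronglyMeasurable hm stronglyMeasurable_condExp
    ((hf.condExp one_le_two).integrable_mul hg) (hg.integrable one_le_two)

variable {Y Z : Ω → ℝ}

theorem integral_mul_eq_integral_sq_of_condExp_eq (hm : m ≤ m₀) (hZm : StronglyMeasurable[m] Z)
    (hcal : μ[Y | m] =ᵐ[μ] Z) (hY : MemLp Y 2 μ) (hZ : MemLp Z 2 μ) :
    ∫ ω, Y ω * Z ω ∂μ = ∫ ω, Z ω ^ 2 ∂μ :=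
  calc ∫ ω, Y ω * Z ω ∂μ = ∫ ω, Z ω * Y ω ∂μ := by simp only [mul_comm]
    _ = ∫ ω, Z ω * μ[Y | m] ω ∂μ :=
        (integral_mul_condExp_of_stronglyMeasurable hm hZm (hZ.integrable_mul hY)
          (hY.integrable one_le_two)).symm
    _ = ∫ ω, Z ω ^ 2 ∂μ := integral_congr_ae (by filter_upwards [hcal] with ω hω; rw [hω, sq])

theorem integral_sub_sq_of_condExp_eq (hm : m ≤ m₀) (hZm : StronglyMeasurable[m] Z)
    (hcal : μ[Y | m] =ᵐ[μ] Z) (hY : MemLp Y 2 μ) (hZ : MemLp Z 2 μ) :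
    ∫ ω, (Y ω - Z ω) ^ 2 ∂μ = ∫ ω, Y ω ^ 2 ∂μ - ∫ ω, Y ω * Z ω ∂μ := by
  have hYZ : Integrable (fun ω ↦ 2 * (Y ω * Z ω)) μ := (hY.integrable_mul hZ).const_mul 2
  have hexpand : ∫ ω, (Y ω - Z ω) ^ 2 ∂μ
      = ∫ ω, Y ω ^ 2 ∂μ - ∫ ω, 2 * (Y ω * Z ω) ∂μ + ∫ ω, Z ω ^ 2 ∂μ := by
    rw [← integral_sub hY.integrable_sq hYZ, ← integral_add _ hZ.integrable_sq]
    · congr with ω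
      ring
    · exact hY.integrable_sq.sub hYZ
  rw [hexpand, integral_const_mul, ← integral_mul_eq_integral_sq_of_condExp_eq hm hZm hcal hY hZ]
  ring

end ConditionalExpectation

theorem setOf_eq_zero_eq_compl {Ω : Type*} {X : Ω → ℝ} (hX : ∀ ω, X ω = 0 ∨ X ω = 1) :
    {ω | X ω = 0} = {ω | X ω = 1}ᶜ := by
  ext ω
  rcases hX ω with h | h <;> simp [h]

section Binary

variable {Ω : Type*} [MeasurableSpace Ω] {μ : Measure Ω} {X : Ω → ℝ}

theorem integral_mul_of_zero_or_one (hXm : Measurable X) (hX : ∀ ω, X ω = 0 ∨ X ω = 1)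
    (f : Ω → ℝ) : ∫ ω, X ω * f ω ∂μ = ∫ ω in {ω | X ω = 1}, f ω ∂μ := by
  have hs : MeasurableSet {ω | X ω = 1} := hXm (measurableSet_singleton 1)
  rw [← integral_indicator hs]
  congr 1 with ω
  rcases hX ω with h | h <;> simp [h]

theorem integral_of_zero_or_one (hXm : Measurable X) (hX : ∀ ω, X ω = 0 ∨ X ω = 1) :
    ∫ ω, X ω ∂μ = μ.real {ω | X ω = 1} := by
  simpa using integral_mul_of_zero_or_one (μ := μ) hXm hX 1

theorem integral_mul_eq_measureReal_inter {W : Ω → ℝ} (hXm : Measurable X)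
    (hX : ∀ ω, X ω = 0 ∨ X ω = 1) (hWm : Measurable W) (hW : ∀ ω, W ω = 0 ∨ W ω = 1) :
    ∫ ω, X ω * W ω ∂μ = μ.real ({ω | X ω = 1} ∩ {ω | W ω = 1}) := by
  have hs : MeasurableSet {ω | W ω = 1} := hWm (measurableSet_singleton 1)
  rw [integral_mul_of_zero_or_one hXm hX, integral_of_zero_or_one hWm hW,
    measureReal_restrict_apply hs, Set.inter_comm]

theorem memLp_of_zero_or_one [IsFiniteMeasure μ] (hXm : Measurable X)
    (hX : ∀ ω, X ω = 0 ∨ X ω = 1) (p : ENNReal) : MemLp X p μ :=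
  .of_bound hXm.aestronglyMeasurable 1 <| .of_forall fun ω ↦ by rcases hX ω with h | h <;> simp [h]

theorem setIntegral_eq_add_of_zero_or_one (hXm : Measurable X) (hX : ∀ ω, X ω = 0 ∨ X ω = 1)
    {f : Ω → ℝ} {s : Set Ω} (hf : IntegrableOn f s μ) :
    ∫ ω in s, f ω ∂μ = ∫ ω in s ∩ {ω | X ω = 1}, f ω ∂μ + ∫ ω in s ∩ {ω | X ω = 0}, f ω ∂μ := by
  have hT : MeasurableSet {ω | X ω = 1} := hXm (measurableSet_singleton 1)
  rw [setOf_eq_zero_eq_compl hX, ← Set.sdiff_eq, integral_inter_add_sdiff hT hf]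

end Binary

section Balance

variable {Ω : Type*} [MeasurableSpace Ω] {P : Measure Ω} [IsFiniteMeasure P] {Z G : Ω → ℝ}
  {s : Set Ω}

theorem setIntegral_eq_condExpEvent_mul (h : P s ≠ 0) :
    ∫ ω in s, Z ω ∂P = condExpEvent P Z s * P.real s := by
  rw [condExpEvent, ← measureReal_def, div_mul_cancel₀ _ ((measureReal_ne_zero_iff).mpr h)]

theorem setIntegral_eq_condExpEvent_mul_of_zero_or_one (hGm : Measurable G)
    (hG : ∀ ω, G ω = 0 ∨ G ω = 1) (hZ : IntegrableOn Z s P)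
    (h₁ : P (s ∩ {ω | G ω = 1}) ≠ 0) (h₀ : P (s ∩ {ω | G ω = 0}) ≠ 0)
    (h : condExpEvent P Z (s ∩ {ω | G ω = 1}) = condExpEvent P Z (s ∩ {ω | G ω = 0})) :
    ∫ ω in s, Z ω ∂P = condExpEvent P Z (s ∩ {ω | G ω = 1}) * P.real s := by
  have hT : MeasurableSet {ω | G ω = 1} := hGm (measurableSet_singleton 1)
  have hsplit := measureReal_inter_add_sdiff (μ := P) (s := s) hT
  rw [Set.sdiff_eq, ← setOf_eq_zero_eq_compl hG] at hsplit
  rw [setIntegral_eq_add_of_zero_or_one hGm hG hZ, ← hsplit, setIntegral_eq_condExpEvent_mul h₁,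
    setIntegral_eq_condExpEvent_mul h₀, h]
  ring

end Balance

theorem eq_zero_or_div_eq_div {e a₁ a₀ p₁ p₀ q₁ q₀ : ℝ} (hq₁ : q₁ ≠ 0) (hq₀ : q₀ ≠ 0)
    (h₁ : e = q₁ - a₁ * q₁) (h₀ : e = a₀ * q₀) (hp : a₁ * p₁ + a₀ * p₀ = p₁) :
    e = 0 ∨ p₁ / q₁ = p₀ / q₀ := by
  have : e * (p₀ / q₀ - p₁ / q₁) = 0 := by
    field_simp
    linear_combination (q₁ * p₀) * h₀ - (q₀ * p₁) * h₁ + q₀ * q₁ * hp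
  rcases mul_eq_zero.mp this with h | h
  · exact .inl h
  · exact .inr (sub_eq_zero.mp h).symm

/-- **impossibility.** If `Y` is {0,1}-valued, `Z` is globally calibrated,
all outcome-by-group events have positive probability, and the model is perfectly fair
(`δ_C = 0` and perfect balance on both classes), then either `MSE(Z) = 0` (oracle) or
`P(G=1|Y=1) = P(G=1|Y=0)` (equal base rates). -/
theorem stmt4 {Ω : Type*} [MeasurableSpace Ω] (P : Measure Ω) [IsProbabilityMeasure P]
    (Y Z G : Ω → ℝ) (hYm : Measurable Y) (hZm : Measurable Z) (hGm : Measurable G)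
    (hY2 : MemLp Y 2 P) (hZ2 : MemLp Z 2 P)
    (hY01 : ∀ ω, Y ω = 0 ∨ Y ω = 1) (hG01 : ∀ ω, G ω = 0 ∨ G ω = 1)
    (hcal : P[Y | MeasurableSpace.comap Z inferInstance] =ᵐ[P] Z)
    (hpos : ∀ y ∈ ({0, 1} : Set ℝ), ∀ g ∈ ({0, 1} : Set ℝ),
      0 < P ({ω | Y ω = y} ∩ {ω | G ω = g}))
    (hfairC : ∫ ω, Y ω * G ω ∂P -
      ∫ ω, (P[Y | MeasurableSpace.comap Z inferInstance]) ω *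
        (P[G | MeasurableSpace.comap Z inferInstance]) ω ∂P = 0)
    (hfairB : ∀ y ∈ ({0, 1} : Set ℝ),
      condExpEvent P Z ({ω | Y ω = y} ∩ {ω | G ω = 1}) =
        condExpEvent P Z ({ω | Y ω = y} ∩ {ω | G ω = 0})) :
    (∫ ω, (Y ω - Z ω) ^ 2 ∂P) = 0 ∨
      condProbEvent P {ω | G ω = 1} {ω | Y ω = 1} =
        condProbEvent P {ω | G ω = 1} {ω | Y ω = 0} := by
  have hm := hZm.comap_le
  have hZsm := (comap_measurable Z).stronglyMeasurable
  have hZ := hZ2.integrable one_le_two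
  have hS₁m : MeasurableSet {ω | Y ω = 1} := hYm (measurableSet_singleton 1)
  have hbal : ∀ y ∈ ({0, 1} : Set ℝ), ∫ ω in {ω | Y ω = y}, Z ω ∂P =
      condExpEvent P Z ({ω | Y ω = y} ∩ {ω | G ω = 1}) * P.real {ω | Y ω = y} := fun y hy ↦
    setIntegral_eq_condExpEvent_mul_of_zero_or_one hGm hG01 hZ.integrableOn
      (hpos y hy 1 (by simp)).ne' (hpos y hy 0 (by simp)).ne' (hfairB y hy)
  have hmse : ∫ ω, (Y ω - Z ω) ^ 2 ∂P = ∫ ω, Y ω ∂P - ∫ ω, Y ω * Z ω ∂P := by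
    rw [integral_sub_sq_of_condExp_eq hm hZsm hcal hY2 hZ2]
    congr 2 with ω
    rcases hY01 ω with h | h <;> simp [h]
  have hmean : ∫ ω in {ω | Y ω = 1}, Z ω ∂P + ∫ ω in {ω | Y ω = 0}, Z ω ∂P = ∫ ω, Y ω ∂P := by
    rw [setOf_eq_zero_eq_compl hY01, integral_add_compl hS₁m hZ]
    exact (integral_congr_ae hcal).symm.trans (integral_condExp hm)
  have hcov : ∫ ω in {ω | G ω = 1}, Z ω ∂P = P.real ({ω | Y ω = 1} ∩ {ω | G ω = 1}) := by
    rw [← integral_mul_eq_measureReal_inter hYm hY01 hGm hG01, sub_eq_zero.mp hfairC,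
      integral_condExp_mul_condExp hm hY2 (memLp_of_zero_or_one hGm hG01 2),
      ← integral_mul_of_zero_or_one hGm hG01]
    refine integral_congr_ae ?_
    filter_upwards [hcal] with ω hω
    rw [hω, mul_comm]
  have hq : ∀ y ∈ ({0, 1} : Set ℝ), P.real {ω | Y ω = y} ≠ 0 := fun y hy ↦
    (measureReal_ne_zero_iff).mpr fun h ↦
      (hpos y hy 1 (by simp)).ne' (measure_mono_null Set.inter_subset_left h)
  rw [hbal 1 (by simp), hbal 0 (by simp), integral_of_zero_or_one hYm hY01] at hmean
  rw [integral_mul_of_zero_or_one hYm hY01, hbal 1 (by simp),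
    integral_of_zero_or_one hYm hY01] at hmse
  rw [setIntegral_eq_add_of_zero_or_one hYm hY01 hZ.integrableOn] at hcov
  simp only [condProbEvent, ← measureReal_def, Set.inter_comm {ω | G ω = 1}] at hcov ⊢
  rw [setIntegral_eq_condExpEvent_mul (hpos 1 (by simp) 1 (by simp)).ne',
    setIntegral_eq_condExpEvent_mul (hpos 0 (by simp) 1 (by simp)).ne'] at hcov
  exact eq_zero_or_div_eq_div (hq 1 (by simp)) (hq 0 (by simp)) hmse (by linarith) hcov
end
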